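/- Let {X_i}_{i∈I} be pairwise comaximal ideals of R and γ the associated preradical γ(M) = {m ∈ M : ⋂_{j∈J} X_j^{k_j} ⊆ r_R(mR) for some finite nonempty J, k_j ≥ 1}. Suppose that for each essential right ideal L of R, each nonempty finite J ⊆ I, and positive integers k_j, one has L·(⋂_{j∈J} X_j^{k_j}) = ⋂_{j∈J} X_j^{k_j}. Then γ is stable: if γ(M) = M then γ(E(M)) = E(M) for the injective hull E(M) of M. -/
import Mathlib


open MulOpposite

/-- The product of two (two-sided) ideals of a possibly noncommutative ring:
the ideal generated by products `a * b` with `a ∈ A`, `b ∈ B`. -/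
def imul {R : Type*} [Ring R] (A B : Ideal R) : Ideal R :=
  Ideal.span {x | ∃ a ∈ A, ∃ b ∈ B, x = a * b}

/-- The `k`-th power of an ideal (with `X ^ 0 = R`). -/
def ipow {R : Type*} [Ring R] (A : Ideal R) : ℕ → Ideal R
  | 0 => ⊤
  | k + 1 => imul (ipow A k) A

/-- The preradical `γ` associated to a family `{X i}` of pairwise comaximal ideals:
`γ(M) = {m ∈ M | ⋂_{i ∈ J} (X i)^(k i) ⊆ r_R(mR)` for some nonempty finite `J ⊆ ι` and
positive integers `k i}`. -/
def gam {R : Type*} [Ring R] {ι : Type*} (X : ι → Ideal R)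
    (M : Type*) [AddCommGroup M] [Module Rᵐᵒᵖ M] : Set M :=
  {m | ∃ J : Finset ι, J.Nonempty ∧ ∃ k : ι → ℕ, (∀ j ∈ J, 1 ≤ k j) ∧
    ∀ r ∈ (⨅ j ∈ J, ipow (X j) (k j)), ∀ s : R, op r • (op s • m) = 0}

section auxiliary

variable {R : Type*} [Ring R]

lemma imul_top_aux (A : Ideal R) : imul ⊤ A = A := by
  apply le_antisymm
  · rw [imul, Ideal.span_le]
    rintro x ⟨a, -, b, hb, rfl⟩
    exact A.mul_mem_left a hb
  · intro b hb
    exact Ideal.subset_span ⟨1, trivial, b, hb, (one_mul b).symm⟩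

lemma ipow_one_aux (A : Ideal R) : ipow A 1 = A := by
  show imul (ipow A 0) A = A
  show imul ⊤ A = A
  exact imul_top_aux A

/-- Existence of a relative complement making the sup essential. -/
lemma exists_essential_compl_aux {M : Type*} [AddCommGroup M] [Module Rᵐᵒᵖ M]
    (N : Submodule Rᵐᵒᵖ M) :
    ∃ C : Submodule Rᵐᵒᵖ M, C ⊓ N = ⊥ ∧
      ∀ K : Submodule Rᵐᵒᵖ M, K ≠ ⊥ → (C ⊔ N) ⊓ K ≠ ⊥ := by
  classical
  set S : Set (Submodule Rᵐᵒᵖ M) := {C | C ⊓ N = ⊥} with hS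
  have hbot : (⊥ : Submodule Rᵐᵒᵖ M) ∈ S := by simp [hS]
  have hchainCond : ∀ c ⊆ S, IsChain (· ≤ ·) c → ∀ y ∈ c,
      ∃ ub ∈ S, ∀ z ∈ c, z ≤ ub := by
    intro c hcS hchain y hy
    refine ⟨sSup c, ?_, fun z hz => le_sSup hz⟩
    rw [hS, Set.mem_setOf_eq, eq_bot_iff]
    intro x hx
    obtain ⟨hx1, hx2⟩ := hx
    obtain ⟨C', hC', hxC'⟩ := (Submodule.mem_sSup_of_directed ⟨y, hy⟩
      (hchain.directedOn)).mp hx1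
    have : x ∈ C' ⊓ N := ⟨hxC', hx2⟩
    rw [hcS hC'] at this
    exact this
  obtain ⟨C, -, hCS, hCmax⟩ := zorn_le_nonempty₀ S hchainCond ⊥ hbot
  refine ⟨C, hCS, ?_⟩
  intro K hK hcon
  have hKC : K ≤ C := by
    have hmem : C ⊔ K ∈ S := by
      rw [hS, Set.mem_setOf_eq, eq_bot_iff]
      intro x hx
      obtain ⟨hxCK, hxN⟩ := hx
      obtain ⟨c, hc, k, hk, rfl⟩ := Submodule.mem_sup.mp hxCK
      have hkmem : k ∈ (C ⊔ N) ⊓ K := by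
        refine ⟨?_, hk⟩
        have hkk : k = (c + k) - c := (add_sub_cancel_left c k).symm
        rw [hkk]
        exact Submodule.sub_mem _ (Submodule.mem_sup_right hxN)
          (Submodule.mem_sup_left hc)
      rw [hcon] at hkmem
      have hk0 : k = 0 := hkmem
      subst hk0
      rw [add_zero] at hxN ⊢
      have : c ∈ C ⊓ N := ⟨hc, hxN⟩
      rwa [hCS] at this
    have := hCmax hmem le_sup_left
    exact le_trans le_sup_right this
  apply hK
  have hK' : K ≤ (C ⊔ N) ⊓ K := le_inf (hKC.trans le_sup_left) le_rfl
  rw [hcon] at hK'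
  exact le_bot_iff.mp hK'

end auxiliary

/-- Proposition (stability of `γ`). Let `{X i}` be pairwise comaximal two-sided ideals of
`R`.  Suppose for every essential right ideal `L` of `R`, nonempty finite `J ⊆ ι` and
positive integers `k j`, one has `L · (⋂_{j ∈ J} (X j)^(k j)) = ⋂_{j ∈ J} (X j)^(k j)`.
Then `γ` is stable: if `γ(M) = M` then `γ(E) = E` for any injective hull `E` of `M`
(an injective module containing `M` as an essential submodule). -/
theorem stmt19.{u, v, w} (R : Type u) [Ring R] {ι : Type v} (X : ι → Ideal R)
    (htwo : ∀ i, ∀ x ∈ X i, ∀ r : R, x * r ∈ X i)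
    (hcom : ∀ i j, i ≠ j → X i ⊔ X j = ⊤)
    (hL : ∀ L : Submodule Rᵐᵒᵖ R,
      (∀ K : Submodule Rᵐᵒᵖ R, K ≠ ⊥ → L ⊓ K ≠ ⊥) →
      ∀ J : Finset ι, J.Nonempty → ∀ k : ι → ℕ, (∀ j ∈ J, 1 ≤ k j) →
        (Submodule.span Rᵐᵒᵖ
            {x : R | ∃ l ∈ L, ∃ a ∈ (⨅ j ∈ J, ipow (X j) (k j)), x = l * a} : Set R) =
          ((⨅ j ∈ J, ipow (X j) (k j) : Ideal R) : Set R))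
    (M : Type w) [AddCommGroup M] [Module Rᵐᵒᵖ M]
    (E : Type w) [AddCommGroup E] [Module Rᵐᵒᵖ E] [Module.Injective Rᵐᵒᵖ E]
    (i : M →ₗ[Rᵐᵒᵖ] E) (hi : Function.Injective i)
    (hiEss : ∀ K : Submodule Rᵐᵒᵖ E, K ≠ ⊥ → LinearMap.range i ⊓ K ≠ ⊥)
    (hMtor : gam X M = Set.univ) :
    gam X E = Set.univ := by
  classical
  have hMgam : ∀ m : M, m ∈ gam X M := by intro m; rw [hMtor]; trivial
  -- ‹ι› is nonempty
  obtain ⟨J₀, hJ₀ne, -⟩ := hMgam 0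
  obtain ⟨i₀, hi₀⟩ := hJ₀ne
  -- the "denominator ideal" of an element of E is essential
  have hdenom : ∀ e : E, ∃ L : Submodule Rᵐᵒᵖ R,
      (∀ r : R, r ∈ L ↔ op r • e ∈ LinearMap.range i) ∧
      (∀ K : Submodule Rᵐᵒᵖ R, K ≠ ⊥ → L ⊓ K ≠ ⊥) := by
    intro e
    set φ : R →ₗ[Rᵐᵒᵖ] E :=
      { toFun := fun r => op r • e
        map_add' := by
          intro a b
          show op (a + b) • e = op a • e + op b • e
          rw [op_add, add_smul]
        map_smul' := by
          intro c r
          show op (c • r) • e = c • (op r • e)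
          rw [show c • r = r * c.unop from rfl, op_mul, op_unop, mul_smul] } with hφ
    refine ⟨(LinearMap.range i).comap φ, fun r => Iff.rfl, ?_⟩
    intro K hK
    by_cases hall : ∀ x ∈ K, φ x = 0
    · intro hcon
      apply hK
      rw [eq_bot_iff, ← hcon]
      refine le_inf ?_ le_rfl
      intro x hx
      show φ x ∈ LinearMap.range i
      rw [hall x hx]
      exact Submodule.zero_mem _
    · push_neg at hall
      obtain ⟨x₀, hx₀K, hx₀⟩ := hall
      have hmapne : Submodule.map φ K ≠ ⊥ := by
        intro hcon
        apply hx₀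
        have : φ x₀ ∈ Submodule.map φ K := Submodule.mem_map_of_mem hx₀K
        rw [hcon] at this
        exact this
      have := hiEss (Submodule.map φ K) hmapne
      rw [Submodule.ne_bot_iff] at this ⊢
      obtain ⟨y, ⟨hyr, hym⟩, hy0⟩ := this
      obtain ⟨x, hxK, hxy⟩ := hym
      refine ⟨x, ⟨?_, hxK⟩, ?_⟩
      · show φ x ∈ LinearMap.range i
        rw [hxy]; exact hyr
      · rintro rfl
        apply hy0
        rw [← hxy, map_zero]
  by_cases hsub : ∀ a b : ι, a = b
  · -- ι is a subsingleton: the single-ideal case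
    set Y : Ideal R := X i₀ with hY
    -- Y as a right submodule
    set Yr : Submodule Rᵐᵒᵖ R :=
      { carrier := Y
        add_mem' := fun ha hb => Y.add_mem ha hb
        zero_mem' := Y.zero_mem
        smul_mem' := by
          intro c x hx
          show x * c.unop ∈ Y
          exact htwo i₀ x hx c.unop } with hYr
    -- essential extension of Yr
    obtain ⟨C, hCd, hCess⟩ := exists_essential_compl_aux Yr
    -- membership in the singleton infimum
    have hinf : ∀ (kk : ι → ℕ) (r : R),
        r ∈ (⨅ j ∈ ({i₀} : Finset ι), ipow (X j) (kk j)) ↔ r ∈ ipow Y (kk i₀) := by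
      intro kk r
      simp only [Submodule.mem_iInf]
      constructor
      · intro h; exact h i₀ (Finset.mem_singleton_self i₀)
      · intro h j hj
        rw [Finset.mem_singleton] at hj
        subst hj
        exact h
    -- idempotency of Y
    have hidem : imul Y Y = Y := by
      apply le_antisymm
      · rw [imul, Ideal.span_le]
        rintro x ⟨a, ha, b, hb, rfl⟩
        exact Y.mul_mem_left a hb
      · intro x hx
        have hspan := hL (C ⊔ Yr) hCess {i₀} ⟨i₀, Finset.mem_singleton_self i₀⟩
          (fun _ => 1) (fun _ _ => le_refl 1)
        have hxinf : x ∈ ((⨅ j ∈ ({i₀} : Finset ι), ipow (X j) ((fun _ => 1) j) :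
            Ideal R) : Set R) := by
          show x ∈ (⨅ j ∈ ({i₀} : Finset ι), ipow (X j) ((fun _ => 1) j) : Ideal R)
          rw [hinf]
          rw [ipow_one_aux]
          exact hx
        rw [← hspan] at hxinf
        -- now x is in the Rᵐᵒᵖ-span; push it into `imul Y Y`
        -- `imul Y Y` is closed under right multiplication
        have hrc : ∀ y ∈ imul Y Y, ∀ r : R, y * r ∈ imul Y Y := by
          intro y hy
          induction hy using Submodule.span_induction with
          | mem z hz =>
            obtain ⟨a, ha, b, hb, rfl⟩ := hz
            intro r
            rw [mul_assoc]
            exact Ideal.subset_span ⟨a, ha, b * r, htwo i₀ b hb r, rfl⟩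
          | zero => intro r; rw [zero_mul]; exact Submodule.zero_mem _
          | add y z _ _ hy hz => intro r; rw [add_mul]; exact Submodule.add_mem _ (hy r) (hz r)
          | smul a y _ hy =>
            intro r
            show a * y * r ∈ imul Y Y
            rw [mul_assoc]
            exact Ideal.mul_mem_left _ a (hy r)
        set W : Submodule Rᵐᵒᵖ R :=
          { carrier := imul Y Y
            add_mem' := fun ha hb => Submodule.add_mem _ ha hb
            zero_mem' := Submodule.zero_mem _
            smul_mem' := by
              intro c y hy
              show y * c.unop ∈ imul Y Y
              exact hrc y hy c.unop } with hW
        have hle : Submodule.span Rᵐᵒᵖ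
            {x : R | ∃ l ∈ C ⊔ Yr, ∃ a ∈ (⨅ j ∈ ({i₀} : Finset ι),
              ipow (X j) ((fun _ => 1) j)), x = l * a} ≤ W := by
          rw [Submodule.span_le]
          rintro y ⟨l, hl, a, hainf, rfl⟩
          have haY : a ∈ Y := by
            have := (hinf (fun _ => 1) a).mp hainf
            rwa [ipow_one_aux] at this
          obtain ⟨c, hc, x', hx', rfl⟩ := Submodule.mem_sup.mp hl
          have hca : c * a = 0 := by
            have h1 : c * a ∈ C := by
              have : c * a = op a • c := rfl
              rw [this]
              exact C.smul_mem _ hc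
            have h2 : c * a ∈ Yr := Y.mul_mem_left c haY
            have : c * a ∈ C ⊓ Yr := ⟨h1, h2⟩
            rwa [hCd] at this
          show (c + x') * a ∈ imul Y Y
          rw [add_mul, hca, zero_add]
          exact Ideal.subset_span ⟨x', hx', a, haY, rfl⟩
        exact hle hxinf
    -- powers of Y collapse
    have hpow : ∀ k : ℕ, 1 ≤ k → ipow Y k = Y := by
      intro k hk
      induction k with
      | zero => omega
      | succ n ih =>
        show imul (ipow Y n) Y = Y
        rcases Nat.eq_zero_or_pos n with h0 | hpos
        · subst h0
          show imul ⊤ Y = Y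
          exact imul_top_aux Y
        · rw [ih hpos, hidem]
    -- every element of M is annihilated by Y
    have hMann : ∀ (m : M) (a : R), a ∈ Y → op a • m = 0 := by
      intro m a ha
      obtain ⟨Jm, hJmne, km, hkm, hann⟩ := hMgam m
      obtain ⟨jm, hjm⟩ := hJmne
      have hmem : a ∈ (⨅ j ∈ Jm, ipow (X j) (km j)) := by
        simp only [Submodule.mem_iInf]
        intro j hj
        have hji : j = i₀ := hsub j i₀
        subst hji
        rw [hpow (km j) (hkm j hj)]
        exact ha
      have := hann a hmem 1
      rwa [op_one, one_smul] at this
    -- conclude: every element of E is annihilated by Y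
    apply Set.eq_univ_iff_forall.mpr
    intro e
    obtain ⟨L₀, hmemL₀, hessL₀⟩ := hdenom e
    have hspan := hL L₀ hessL₀ {i₀} ⟨i₀, Finset.mem_singleton_self i₀⟩
      (fun _ => 1) (fun _ _ => le_refl 1)
    have hEann0 : ∀ u ∈ Submodule.span Rᵐᵒᵖ
        {x : R | ∃ l ∈ L₀, ∃ a ∈ (⨅ j ∈ ({i₀} : Finset ι),
          ipow (X j) ((fun _ => 1) j)), x = l * a}, op u • e = 0 := by
      intro u huinf
      induction huinf using Submodule.span_induction with
      | mem z hz =>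
        obtain ⟨l, hl, a, hainf, rfl⟩ := hz
        have haY : a ∈ Y := by
          have := (hinf (fun _ => 1) a).mp hainf
          rwa [ipow_one_aux] at this
        obtain ⟨m, hm⟩ := (hmemL₀ l).mp hl
        rw [op_mul, mul_smul, ← hm, ← map_smul, hMann m a haY, map_zero]
      | zero => rw [op_zero, zero_smul]
      | add y z _ _ hy hz => rw [op_add, add_smul, hy, hz, add_zero]
      | smul c y _ hy =>
        show op (c • y) • e = 0
        rw [show c • y = y * c.unop from rfl, op_mul, mul_smul, hy, smul_zero]
    have hEann : ∀ u ∈ Y, op u • e = 0 := by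
      intro u hu
      apply hEann0
      have huinf : u ∈ ((⨅ j ∈ ({i₀} : Finset ι), ipow (X j) ((fun _ => 1) j) :
          Ideal R) : Set R) := by
        show u ∈ (⨅ j ∈ ({i₀} : Finset ι), ipow (X j) ((fun _ => 1) j) : Ideal R)
        rw [hinf, ipow_one_aux]
        exact hu
      rw [← hspan] at huinf
      exact huinf
    refine ⟨{i₀}, ⟨i₀, Finset.mem_singleton_self i₀⟩, fun _ => 1, fun _ _ => le_refl 1, ?_⟩
    intro r hr s
    have hrY : r ∈ Y := by
      have := (hinf (fun _ => 1) r).mp hr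
      rwa [ipow_one_aux] at this
    rw [smul_smul, ← op_mul]
    exact hEann (s * r) (Y.mul_mem_left s hrY)
  · -- there exist two distinct indices: every essential right ideal is ⊤
    push_neg at hsub
    obtain ⟨ia, ja, hab⟩ := hsub
    have hXsub : ∀ L : Submodule Rᵐᵒᵖ R, (∀ K : Submodule Rᵐᵒᵖ R, K ≠ ⊥ → L ⊓ K ≠ ⊥) →
        ∀ b : ι, ∀ x ∈ X b, x ∈ L := by
      intro L hLe b x hx
      have hspan := hL L hLe {b} ⟨b, Finset.mem_singleton_self b⟩
        (fun _ => 1) (fun _ _ => le_refl 1)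
      have hxinf : x ∈ ((⨅ j ∈ ({b} : Finset ι), ipow (X j) ((fun _ => 1) j) :
          Ideal R) : Set R) := by
        show x ∈ (⨅ j ∈ ({b} : Finset ι), ipow (X j) ((fun _ => 1) j) : Ideal R)
        simp only [Submodule.mem_iInf]
        intro j hj
        rw [Finset.mem_singleton] at hj
        subst hj
        rw [ipow_one_aux]
        exact hx
      rw [← hspan] at hxinf
      have hle : Submodule.span Rᵐᵒᵖ
          {x : R | ∃ l ∈ L, ∃ a ∈ (⨅ j ∈ ({b} : Finset ι),
            ipow (X j) ((fun _ => 1) j)), x = l * a} ≤ L := by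
        rw [Submodule.span_le]
        rintro y ⟨l, hl, a, ha, rfl⟩
        have : l * a = op a • l := rfl
        rw [this]
        exact L.smul_mem _ hl
      exact hle hxinf
    apply Set.eq_univ_iff_forall.mpr
    intro e
    obtain ⟨L₀, hmemL₀, hessL₀⟩ := hdenom e
    have h1L : (1 : R) ∈ L₀ := by
      have h1 : (1 : R) ∈ X ia ⊔ X ja := by rw [hcom ia ja hab]; trivial
      obtain ⟨a, ha, b, hb, hab1⟩ := Submodule.mem_sup.mp h1
      have := L₀.add_mem (hXsub L₀ hessL₀ ia a ha) (hXsub L₀ hessL₀ ja b hb)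
      rwa [hab1] at this
    have : op (1 : R) • e ∈ LinearMap.range i := (hmemL₀ 1).mp h1L
    rw [op_one, one_smul] at this
    obtain ⟨m, hm⟩ := this
    obtain ⟨Jm, hJmne, km, hkm, hann⟩ := hMgam m
    refine ⟨Jm, hJmne, km, hkm, ?_⟩
    intro r hr s
    rw [← hm, ← map_smul, ← map_smul, hann r hr s, map_zero]
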